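/- arXiv:2005.12915 — 3 statements merged into one kernel-verified Lean document; each statement's English description precedes it below -/
import Mathlib

section
/- For every non-complete graph G on at least 2 vertices, χ_pc(G) ≤ |V(G)| − 1. -/
open Finset SimpleGraph

/-- `L` is a `k`-assignment: every vertex gets a list (finset) of exactly `k` colors. -/
def IsKAssignment {V : Type*} (L : V → Finset ℕ) (k : ℕ) : Prop :=
  ∀ v, (L v).card = k

/-- The multiplicity `η_L(c)`: the number of vertices whose list contains `c`. -/
def mult {V : Type*} [Fintype V] (L : V → Finset ℕ) (c : ℕ) : ℕ :=
  (Finset.univ.filter (fun v => c ∈ L v)).card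

/-- The palette of a list assignment: the union of all the lists. -/
def palette {V : Type*} [Fintype V] (L : V → Finset ℕ) : Finset ℕ :=
  Finset.univ.biUnion L

/-- A proper `L`-coloring: each vertex is colored from its list, and adjacent
vertices get different colors. -/
def IsProperListColoring {V : Type*} (G : SimpleGraph V) (L : V → Finset ℕ)
    (f : V → ℕ) : Prop :=
  (∀ v, f v ∈ L v) ∧ ∀ ⦃u w⦄, G.Adj u w → f u ≠ f w

/-- A proportional `L`-coloring: a proper `L`-coloring such that each color `c` in
the palette is used `⌊η(c)/k⌋` or `⌈η(c)/k⌉` times. -/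
def IsProportionalColoring {V : Type*} [Fintype V] (G : SimpleGraph V)
    (L : V → Finset ℕ) (k : ℕ) (f : V → ℕ) : Prop :=
  IsProperListColoring G L f ∧
    ∀ c ∈ palette L,
      (Finset.univ.filter (fun v => f v = c)).card = mult L c / k ∨
      (Finset.univ.filter (fun v => f v = c)).card = (mult L c + k - 1) / k

/-- `G` is proportionally `k`-choosable. -/
def ProportionallyChoosable {V : Type*} [Fintype V] (G : SimpleGraph V) (k : ℕ) : Prop :=
  ∀ L : V → Finset ℕ, IsKAssignment L k → ∃ f, IsProportionalColoring G L k f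

/-- The proportional choice number `χ_pc(G)`. -/
noncomputable def propChoiceNumber {V : Type*} [Fintype V] (G : SimpleGraph V) : ℕ :=
  sInf {k | ProportionallyChoosable G k}

/-- An equitable `k`-coloring exists: a proper coloring with `k` (possibly empty)
color classes whose sizes pairwise differ by at most one. -/
def EquitablyColorable {V : Type*} [Fintype V] (G : SimpleGraph V) (k : ℕ) : Prop :=
  ∃ f : V → Fin k, (∀ ⦃u w⦄, G.Adj u w → f u ≠ f w) ∧
    ∀ c c' : Fin k,
      (Finset.univ.filter (fun v => f v = c)).card ≤
        (Finset.univ.filter (fun v => f v = c')).card + 1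

/-- The complete bipartite graph `K_{n,m}`. -/
abbrev KBip (n m : ℕ) : SimpleGraph (Fin n ⊕ Fin m) :=
  completeBipartiteGraph (Fin n) (Fin m)

/-!
Let `n = |V|` and `k = n - 1`, and let `L` be a `k`-assignment; the lists have total size `n k`.

If the palette has fewer than `n` colors, every list is the whole palette of `k` colors, each of
multiplicity `n = k + 1`. Giving a non-adjacent pair `u, v` one color and the other `k - 1`
vertices the remaining colors uses every color once or twice, which is proportional.

Otherwise call a color heavy if it lies in at least `k` lists. A coloring with distinct colors that
uses every heavy color is proportional, since a color of multiplicity `m < k` may be used `0` or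
`1` times and one with `k ≤ m ≤ k + 1` exactly once (for `k = 1` no color lies in both
singleton lists, as the palette has two colors). Such a coloring exists by Hall's theorem,
applied to the lists `L v` together with `|palette L| - n` dummy lists of non-heavy colors: a heavy
color misses at most one list, and counting `n k` shows there are at most `n` heavy colors, fewer
if the palette has more than `n` colors.
-/

section Counting

variable {V : Type*} [Fintype V] {L : V → Finset ℕ} {k : ℕ}

lemma mem_palette {c : ℕ} : c ∈ palette L ↔ ∃ v, c ∈ L v := by
  simp [palette]

lemma subset_palette (L : V → Finset ℕ) (v : V) : L v ⊆ palette L :=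
  fun _ hc => mem_palette.2 ⟨v, hc⟩

lemma mult_le_card (L : V → Finset ℕ) (c : ℕ) : mult L c ≤ Fintype.card V :=
  card_filter_le _ _

lemma one_le_mult {c : ℕ} (hc : c ∈ palette L) : 1 ≤ mult L c := by
  obtain ⟨v, hv⟩ := mem_palette.1 hc
  exact card_pos.2 ⟨v, by simp [hv]⟩

lemma mult_eq_card_iff {c : ℕ} : mult L c = Fintype.card V ↔ ∀ v, c ∈ L v := by
  simp [mult, ← card_univ, card_filter_eq_iff]

lemma sum_mult_palette (L : V → Finset ℕ) :
    ∑ c ∈ palette L, mult L c = ∑ v, #(L v) := by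
  classical
  simp_rw [mult, card_filter]
  rw [sum_comm]
  refine sum_congr rfl fun v _ => ?_
  rw [← card_filter, filter_mem_eq_inter, inter_eq_right.2 (subset_palette L v)]

lemma IsKAssignment.sum_mult (hL : IsKAssignment L k) :
    ∑ c ∈ palette L, mult L c = Fintype.card V * k := by
  simp [sum_mult_palette, hL _]

lemma IsKAssignment.eq_palette (hL : IsKAssignment L k) (hP : #(palette L) ≤ k) (v : V) :
    L v = palette L :=
  eq_of_subset_of_card_le (subset_palette L v) (hL v ▸ hP)

end Counting

lemma one_eq_div_or_ceil_div {m k : ℕ} (h₁ : 1 ≤ m) (h₂ : m < 2 * k) :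
    1 = m / k ∨ 1 = (m + k - 1) / k := by
  rcases le_or_gt k m with h | h
  · exact .inl (Nat.div_eq_of_lt_le (by omega) (by omega)).symm
  · exact .inr (Nat.div_eq_of_lt_le (by omega) (by omega)).symm

lemma two_eq_ceil_div_succ {k : ℕ} (hk : 0 < k) : 2 = (k + 1 + k - 1) / k :=
  (Nat.div_eq_of_lt_le (by omega) (by omega)).symm

def heavyColors {V : Type*} [Fintype V] (L : V → Finset ℕ) (k : ℕ) : Finset ℕ :=
  (palette L).filter (k ≤ mult L ·)

section Heavy

variable {V : Type*} [Fintype V] {L : V → Finset ℕ} {k : ℕ}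

lemma heavyColors_subset_palette : heavyColors L k ⊆ palette L :=
  filter_subset _ _

lemma IsKAssignment.card_heavyColors_mul_add_le (hL : IsKAssignment L k) :
    #(heavyColors L k) * k + #(palette L \ heavyColors L k) ≤ Fintype.card V * k := by
  have hheavy := card_nsmul_le_sum (heavyColors L k) (mult L ·) k
    fun c hc => (mem_filter.1 hc).2
  have hlight := card_nsmul_le_sum (palette L \ heavyColors L k) (mult L ·) 1
    fun c hc => one_le_mult (mem_sdiff.1 hc).1
  rw [← hL.sum_mult, ← sum_sdiff (heavyColors_subset_palette (k := k))]
  simp only [smul_eq_mul, mul_one] at hheavy hlight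
  omega

lemma IsKAssignment.card_heavyColors_lt (hL : IsKAssignment L k) (hk : 0 < k)
    (hP : Fintype.card V < #(palette L)) : #(heavyColors L k) < Fintype.card V := by
  have hbound := hL.card_heavyColors_mul_add_le
  have hHn : #(heavyColors L k) ≤ Fintype.card V :=
    Nat.le_of_mul_le_mul_right (by omega) hk
  have := card_sdiff_of_subset (heavyColors_subset_palette (L := L) (k := k))
  by_contra h
  rw [show #(heavyColors L k) = Fintype.card V by omega] at hbound
  omega

lemma exists_mem_of_mem_heavyColors (hn : Fintype.card V = k + 1) {c : ℕ}
    (hc : c ∈ heavyColors L k) {A : Finset V} (hA : 2 ≤ #A) : ∃ a ∈ A, c ∈ L a := by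
  by_contra! hA'
  have hsub : A ⊆ univ.filter (c ∉ L ·) := fun a ha => mem_filter.2 ⟨mem_univ a, hA' a ha⟩
  have hsplit := card_filter_add_card_filter_not (s := univ) (fun v => c ∈ L v)
  have hck : k ≤ mult L c := (mem_filter.1 hc).2
  rw [card_univ] at hsplit
  have := card_le_card hsub
  unfold mult at hck
  omega

end Heavy

section Rainbow

variable {V : Type*} [Fintype V] {L : V → Finset ℕ} {k : ℕ}

/-- Hall's condition for the lists `L v`, together with `|palette L| - |V|` dummy lists equal to
the non-heavy colors. -/
lemma IsKAssignment.card_le_card_biUnion (hL : IsKAssignment L k)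
    (hn : Fintype.card V = k + 1) (hk : 0 < k) (hP : Fintype.card V ≤ #(palette L))
    (s : Finset (V ⊕ Fin (#(palette L) - Fintype.card V))) :
    #s ≤ #(s.biUnion (Sum.elim L fun _ => palette L \ heavyColors L k)) := by
  classical
  set t := Sum.elim L fun _ => palette L \ heavyColors L k
  set N := s.biUnion t
  have hLN : ∀ a ∈ s.toLeft, L a ⊆ N := fun a ha => subset_biUnion_of_mem t (mem_toLeft.1 ha)
  have hlightN : ∀ i ∈ s.toRight, palette L \ heavyColors L k ⊆ N :=
    fun i hi => subset_biUnion_of_mem t (mem_toRight.1 hi)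
  have hs : #s = #s.toLeft + #s.toRight := card_toLeft_add_card_toRight.symm
  have hright : #s.toRight ≤ #(palette L) - Fintype.card V :=
    (card_le_univ _).trans_eq (Fintype.card_fin _)
  have of_palette_subset (h : palette L ⊆ N) : #s ≤ #N := by
    have := card_le_card h
    have := card_le_univ s.toLeft
    omega
  rcases eq_or_ne s.toLeft univ with hAu | hAu
  · refine of_palette_subset fun c hc => ?_
    obtain ⟨a, ha⟩ := mem_palette.1 hc
    exact hLN a (hAu ▸ mem_univ a) ha
  have hAk : #s.toLeft ≤ k := by
    have := (card_lt_iff_ne_univ _).2 hAu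
    omega
  rcases s.toRight.eq_empty_or_nonempty with hBe | ⟨i, hi⟩
  · rcases s.toLeft.eq_empty_or_nonempty with hAe | ⟨a, ha⟩
    · simp [hs, hAe, hBe]
    · calc #s = #s.toLeft := by simp [hs, hBe]
        _ ≤ #(L a) := hL a ▸ hAk
        _ ≤ #N := card_le_card (hLN a ha)
  · have hHn := hL.card_heavyColors_lt hk (by have := card_pos.2 ⟨i, hi⟩; omega)
    have hlight := card_sdiff_of_subset (heavyColors_subset_palette (L := L) (k := k))
    rcases le_or_gt #s.toLeft 1 with hA1 | hA2
    · have := card_le_card (hlightN i hi)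
      omega
    · refine of_palette_subset fun c hc => ?_
      by_cases hcH : c ∈ heavyColors L k
      · obtain ⟨a, ha, hca⟩ := exists_mem_of_mem_heavyColors hn hcH hA2
        exact hLN a ha hca
      · exact hlightN i hi (mem_sdiff.2 ⟨hc, hcH⟩)

theorem IsKAssignment.exists_injective_forall_heavyColors (hL : IsKAssignment L k)
    (hn : Fintype.card V = k + 1) (hk : 0 < k) (hP : Fintype.card V ≤ #(palette L)) :
    ∃ f : V → ℕ, Function.Injective f ∧ (∀ v, f v ∈ L v) ∧
      ∀ c ∈ heavyColors L k, ∃ v, f v = c := by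
  classical
  obtain ⟨F, hFinj, hFmem⟩ := (all_card_le_biUnion_card_iff_exists_injective _).1
    (hL.card_le_card_biUnion hn hk hP)
  have hFP : ∀ x, F x ∈ palette L := by
    rintro (v | i)
    exacts [subset_palette L v (hFmem _), (mem_sdiff.1 (hFmem (.inr i))).1]
  have himage : univ.image F = palette L := by
    refine eq_of_subset_of_card_le (image_subset_iff.2 fun x _ => hFP x) ?_
    rw [card_image_of_injective _ hFinj, card_univ, Fintype.card_sum, Fintype.card_fin]
    omega
  refine ⟨F ∘ Sum.inl, hFinj.comp Sum.inl_injective, fun v => hFmem _, fun c hc => ?_⟩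
  obtain ⟨x | i, -, rfl⟩ := mem_image.1 (himage ▸ heavyColors_subset_palette hc)
  · exact ⟨x, rfl⟩
  · exact absurd hc (mem_sdiff.1 (hFmem (.inr i))).2

lemma filter_apply_eq_singleton {α β : Type*} [Fintype α] [DecidableEq β] {f : α → β}
    (hf : Function.Injective f) (w : α) :
    univ.filter (fun v => f v = f w) = {w} := by
  ext
  simp [hf.eq_iff]

lemma IsKAssignment.isProportionalColoring_of_injective (G : SimpleGraph V)
    (hL : IsKAssignment L k) (hn : Fintype.card V = k + 1) (hk : 0 < k) {f : V → ℕ}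
    (hf : Function.Injective f) (hfL : ∀ v, f v ∈ L v)
    (hheavy : ∀ c ∈ heavyColors L k, ∃ v, f v = c) : IsProportionalColoring G L k f := by
  refine ⟨⟨hfL, fun a b hab h => hab.ne (hf h)⟩, fun c hc => ?_⟩
  have hc₁ := one_le_mult hc
  have hcn := mult_le_card L c
  by_cases hcf : ∃ v, f v = c
  · obtain ⟨w, rfl⟩ := hcf
    rw [filter_apply_eq_singleton hf w, card_singleton]
    refine one_eq_div_or_ceil_div hc₁ (lt_of_not_ge fun hc₂ => ?_)
    -- Then `k = 1` and `f w` is in every list, so every list is `{f w}`.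
    have hall : ∀ v, f v = f w := fun v =>
      card_le_one.1 (by rw [hL v]; omega) _ (hfL v) _ (mult_eq_card_iff.1 (by omega) v)
    obtain ⟨a, b, hab⟩ := Fintype.exists_pair_of_one_lt_card (α := V) (by omega)
    exact hab (hf ((hall a).trans (hall b).symm))
  · simp only [not_exists] at hcf
    have hck : mult L c < k := lt_of_not_ge fun h =>
      (hheavy c (mem_filter.2 ⟨hc, h⟩)).elim fun v hv => hcf v hv
    rw [filter_false_of_mem fun v _ => hcf v, card_empty]
    exact .inl (Nat.div_eq_of_lt hck).symm

end Rainbow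

section Merge

variable {V : Type*} {u v : V}

def mergeVertex [DecidableEq V] (huv : u ≠ v) (x : V) : {x // x ≠ v} :=
  if h : x = v then ⟨u, huv⟩ else ⟨x, h⟩

lemma filter_mergeVertex_eq_self [Fintype V] [DecidableEq V] (huv : u ≠ v) :
    univ.filter (fun x => mergeVertex huv x = ⟨u, huv⟩) = {u, v} := by
  ext x
  by_cases hx : x = v <;> simp [mergeVertex, hx]

lemma filter_mergeVertex_eq_of_ne [Fintype V] [DecidableEq V] (huv : u ≠ v)
    {w : {x // x ≠ v}} (hw : (w : V) ≠ u) :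
    univ.filter (fun x => mergeVertex huv x = w) = {(w : V)} := by
  ext x
  by_cases hx : x = v
  · subst hx
    simp [mergeVertex, Subtype.ext_iff, Ne.symm hw, w.2.symm]
  · simp [mergeVertex, hx, Subtype.ext_iff]

lemma eq_or_eq_of_mergeVertex_eq [DecidableEq V] (huv : u ≠ v) {a b : V}
    (h : mergeVertex huv a = mergeVertex huv b) (hab : a ≠ b) :
    a = u ∧ b = v ∨ a = v ∧ b = u := by
  unfold mergeVertex at h
  split_ifs at h <;> simp_all [Subtype.ext_iff]

variable [Fintype V] {L : V → Finset ℕ} {k : ℕ}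

lemma IsKAssignment.exists_isProportionalColoring_of_card_palette_lt {G : SimpleGraph V}
    (hL : IsKAssignment L k) (hn : Fintype.card V = k + 1) (huv : u ≠ v) (hadj : ¬ G.Adj u v)
    (hP : #(palette L) < Fintype.card V) : ∃ f, IsProportionalColoring G L k f := by
  classical
  have hk : 0 < k := by
    have := Fintype.one_lt_card_iff.2 ⟨u, v, huv⟩
    omega
  have hLP := hL.eq_palette (by omega)
  have hPk : #(palette L) = k := hLP u ▸ hL u
  have hmult : ∀ c ∈ palette L, mult L c = k + 1 := fun c hc =>
    hn ▸ mult_eq_card_iff.2 fun x => hLP x ▸ hc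
  let e : {x // x ≠ v} ≃ palette L :=
    Fintype.equivOfCardEq (by simp [Fintype.card_subtype_compl, hn, hPk])
  refine ⟨fun x => e (mergeVertex huv x), ⟨fun x => ?_, fun a b hab h => ?_⟩,
    fun c hc => ?_⟩
  · rw [hLP x]
    exact (e _).2
  · rcases eq_or_eq_of_mergeVertex_eq huv (e.injective (Subtype.ext h)) hab.ne with
      ⟨rfl, rfl⟩ | ⟨rfl, rfl⟩
    exacts [hadj hab, hadj hab.symm]
  obtain ⟨w, hw⟩ := e.surjective ⟨c, hc⟩
  have hfiber : univ.filter (fun x => (e (mergeVertex huv x) : ℕ) = c) =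
      univ.filter (mergeVertex huv · = w) := by
    refine filter_congr fun x _ => ?_
    rw [← e.apply_eq_iff_eq, hw, Subtype.ext_iff]
  rw [hfiber, hmult c hc]
  by_cases hwu : (w : V) = u
  · obtain rfl : w = ⟨u, huv⟩ := Subtype.ext hwu
    rw [filter_mergeVertex_eq_self, card_pair huv]
    exact .inr (two_eq_ceil_div_succ hk)
  · have hk₂ : 2 ≤ k := hPk ▸ one_lt_card.2 ⟨c, hc, e ⟨u, huv⟩, (e _).2, fun h =>
      hwu (congrArg Subtype.val (e.injective (hw.trans (Subtype.ext h))))⟩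
    rw [filter_mergeVertex_eq_of_ne huv hwu, card_singleton]
    exact one_eq_div_or_ceil_div (by omega) (by omega)

end Merge

theorem stmt15_general {V : Type*} [Fintype V] (G : SimpleGraph V)
    (hnoncomplete : ∃ u v : V, u ≠ v ∧ ¬ G.Adj u v) :
    propChoiceNumber G ≤ Fintype.card V - 1 := by
  obtain ⟨u, v, huv, hadj⟩ := hnoncomplete
  have hV := Fintype.one_lt_card_iff.2 ⟨u, v, huv⟩
  have hn : Fintype.card V = Fintype.card V - 1 + 1 := by omega
  refine Nat.sInf_le fun L hL => ?_
  rcases lt_or_ge #(palette L) (Fintype.card V) with hP | hP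
  · exact hL.exists_isProportionalColoring_of_card_palette_lt hn huv hadj hP
  · obtain ⟨f, hf, hfL, hheavy⟩ := hL.exists_injective_forall_heavyColors hn (by omega) hP
    exact ⟨f, hL.isProportionalColoring_of_injective G hn (by omega) hf hfL hheavy⟩

/-- Every non-complete graph `G` on at least two vertices satisfies
`χ_pc(G) ≤ |V(G)| - 1`. -/
theorem stmt15 {V : Type*} [Fintype V] (G : SimpleGraph V)
    (hcard : 2 ≤ Fintype.card V)
    (hnoncomplete : ∃ u v : V, u ≠ v ∧ ¬ G.Adj u v) :
    propChoiceNumber G ≤ Fintype.card V - 1 :=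
  stmt15_general G hnoncomplete
end

section
/- For every m ≥ 1, χ_pc(K_{m,m}) > m; i.e., the complete bipartite graph K_{m,m} is not proportionally m-choosable. -/
open Finset SimpleGraph

/-!
Put the lists `{0, …, k-1}` on one side `A` of a copy of `K_{k,k}`, the lists
`{0, k, …, 2k-2}` on the other side `B`, and `{2k, …, 3k-1}` everywhere else. Each color
`c ≠ 0` of `A ∪ B` then lies in exactly `k` lists, so a proportional coloring uses it at most
once. The shared color `0` cannot appear on both sides, so one side of size `k` is colored
injectively from its `k - 1` nonzero colors, which is impossible. Hence `K_{m,m}` is not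
proportionally `k`-choosable for any `k ≤ m`; since every graph is proportionally
`k`-choosable once `k` exceeds its order (Hall's theorem gives an injective list coloring),
`χ_pc(K_{m,m})` is attained and exceeds `m`.
-/

variable {V : Type*} {G : SimpleGraph V} {L : V → Finset ℕ} {k : ℕ} {f : V → ℕ}

lemma mult_le_card_of_subset [Fintype V] {c : ℕ} {s : Finset V} (h : ∀ v, c ∈ L v → v ∈ s) :
    mult L c ≤ #s :=
  card_le_card fun v hv => h v (mem_filter.mp hv).2

namespace IsProportionalColoring

variable [Fintype V]

lemma card_colorClass_le_one (hf : IsProportionalColoring G L k f) {v : V}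
    (hv : mult L (f v) ≤ k) : #{w | f w = f v} ≤ 1 := by
  have hpal : f v ∈ palette L := mem_biUnion.mpr ⟨v, mem_univ v, hf.1.1 v⟩
  rcases Nat.eq_zero_or_pos k with rfl | hk
  · rcases hf.2 _ hpal with h | h <;> simp [h]
  rcases hf.2 _ hpal with h | h <;> rw [h]
  · exact Nat.div_le_of_le_mul (by omega)
  · exact Nat.le_of_lt_succ ((Nat.div_lt_iff_lt_mul hk).mpr (by omega))

lemma injOn (hf : IsProportionalColoring G L k f) {s : Set V}
    (hs : ∀ v ∈ s, mult L (f v) ≤ k) : Set.InjOn f s := fun a ha b _ hab =>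
  card_le_one.mp (hf.card_colorClass_le_one (hs a ha)) a (by simp) b (by simp [hab])

lemma card_le_card_of_mapsTo [DecidableEq V] (hf : IsProportionalColoring G L k f)
    {s : Finset V} {t : Finset ℕ} (hst : ∀ v ∈ s, f v ∈ t) (ht : ∀ c ∈ t, mult L c ≤ k) :
    #s ≤ #t :=
  card_le_card_of_injOn f hst (hf.injOn fun v hv => ht _ (hst v hv))

end IsProportionalColoring

lemma not_proportionallyChoosable_zero [Fintype V] [Nonempty V] :
    ¬ ProportionallyChoosable G 0 := by
  intro h
  obtain ⟨f, hf⟩ := h (fun _ => ∅) fun _ => card_empty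
  exact notMem_empty _ (hf.1.1 (Classical.arbitrary V))

lemma proportionallyChoosable_of_card_lt [Fintype V] [DecidableEq V]
    (hk : Fintype.card V < k) : ProportionallyChoosable G k := by
  intro L hL
  have hall : ∀ s : Finset V, #s ≤ #(s.biUnion L) := by
    intro s
    obtain rfl | ⟨v, hv⟩ := s.eq_empty_or_nonempty
    · simp
    calc #s ≤ Fintype.card V := card_le_univ s
      _ ≤ #(L v) := by rw [hL v]; omega
      _ ≤ #(s.biUnion L) := card_le_card (subset_biUnion_of_mem L hv)
  obtain ⟨f, hinj, hf⟩ := (all_card_le_biUnion_card_iff_exists_injective L).mp hall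
  refine ⟨f, ⟨hf, fun u w hadj h => hadj.ne (hinj h)⟩, fun c hc => ?_⟩
  have hclass : #{v | f v = c} ≤ 1 :=
    card_le_one.mpr fun a ha b hb => hinj ((mem_filter.mp ha).2.trans (mem_filter.mp hb).2.symm)
  have hmult_lt : mult L c < k := (card_le_univ _).trans_lt hk
  have hmult_pos : 0 < mult L c := by
    obtain ⟨v, -, hv⟩ := mem_biUnion.mp hc
    exact card_pos.mpr ⟨v, mem_filter.mpr ⟨mem_univ v, hv⟩⟩
  interval_cases h : #{v | f v = c}
  · exact .inl (Nat.div_eq_of_lt hmult_lt).symm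
  · exact .inr (Nat.div_eq_of_lt_le (by omega) (by omega)).symm

lemma lt_propChoiceNumber [Fintype V] {m : ℕ} (h : ∀ k ≤ m, ¬ ProportionallyChoosable G k) :
    m < propChoiceNumber G := by
  classical
  have hne : {k | ProportionallyChoosable G k}.Nonempty :=
    ⟨_, proportionallyChoosable_of_card_lt (Nat.lt_succ_self (Fintype.card V))⟩
  by_contra! hle
  exact h _ hle (Nat.sInf_mem hne)

def bicliqueAssignment [DecidableEq V] (A B : Finset V) (k : ℕ) (v : V) : Finset ℕ :=
  if v ∈ A then range k else if v ∈ B then insert 0 (Ico k (2 * k - 1)) else Ico (2 * k) (3 * k)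

section bicliqueAssignment

variable [DecidableEq V] {A B : Finset V}

lemma bicliqueAssignment_isKAssignment (hk : 0 < k) :
    IsKAssignment (bicliqueAssignment A B k) k := by
  intro v
  unfold bicliqueAssignment
  split_ifs
  · exact card_range k
  · rw [card_insert_of_notMem (by simp; omega), Nat.card_Ico]; omega
  · rw [Nat.card_Ico]; omega

lemma mult_bicliqueAssignment_le_of_mem_Ico_one [Fintype V] {c : ℕ} (hc : c ∈ Ico 1 k) :
    mult (bicliqueAssignment A B k) c ≤ #A := by
  refine mult_le_card_of_subset fun v hv => ?_
  simp only [mem_Ico] at hc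
  unfold bicliqueAssignment at hv
  split_ifs at hv with hA <;> simp at hv <;> omega

lemma mult_bicliqueAssignment_le_of_mem_Ico [Fintype V] {c : ℕ} (hc : c ∈ Ico k (2 * k - 1)) :
    mult (bicliqueAssignment A B k) c ≤ #B := by
  refine mult_le_card_of_subset fun v hv => ?_
  simp only [mem_Ico] at hc
  unfold bicliqueAssignment at hv
  split_ifs at hv with hA hB <;> simp at hv <;> omega

end bicliqueAssignment

lemma not_proportionallyChoosable_of_forall_adj [Fintype V] (A B : Finset V) (hA : #A = k)
    (hB : #B = k) (hAB : ∀ a ∈ A, ∀ b ∈ B, G.Adj a b) (hk : 0 < k) :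
    ¬ ProportionallyChoosable G k := by
  classical
  intro hPC
  obtain ⟨f, hf⟩ := hPC _ (bicliqueAssignment_isKAssignment (A := A) (B := B) hk)
  have hlist := hf.1.1
  simp only [bicliqueAssignment] at hlist
  by_cases h0 : ∃ a ∈ A, f a = 0
  · obtain ⟨a, ha, hfa⟩ := h0
    have hmaps : ∀ b ∈ B, f b ∈ Ico k (2 * k - 1) := by
      intro b hb
      have hbA : b ∉ A := fun hbA => (hAB b hbA b hb).ne rfl
      have hfb := hlist b
      rw [if_neg hbA, if_pos hb, mem_insert] at hfb
      exact hfb.resolve_left fun h => hf.1.2 (hAB a ha b hb) (hfa.trans h.symm)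
    have := hf.card_le_card_of_mapsTo hmaps fun c hc =>
      (mult_bicliqueAssignment_le_of_mem_Ico hc).trans hB.le
    rw [hB, Nat.card_Ico] at this
    omega
  · push Not at h0
    have hmaps : ∀ a ∈ A, f a ∈ Ico 1 k := by
      intro a ha
      have hfa := hlist a
      rw [if_pos ha, mem_range] at hfa
      exact mem_Ico.mpr ⟨Nat.one_le_iff_ne_zero.mpr (h0 a ha), hfa⟩
    have := hf.card_le_card_of_mapsTo hmaps fun c hc =>
      (mult_bicliqueAssignment_le_of_mem_Ico_one hc).trans hA.le
    rw [hA, Nat.card_Ico] at this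
    omega

lemma kBip_not_proportionallyChoosable {m k : ℕ} (hm : 1 ≤ m) (hk : k ≤ m) :
    ¬ ProportionallyChoosable (KBip m m) k := by
  obtain rfl | hk0 := Nat.eq_zero_or_pos k
  · have : Nonempty (Fin m ⊕ Fin m) := ⟨.inl ⟨0, hm⟩⟩
    exact not_proportionallyChoosable_zero
  refine not_proportionallyChoosable_of_forall_adj
    (univ.map ((Fin.castLEEmb hk).trans .inl)) (univ.map ((Fin.castLEEmb hk).trans .inr))
    (by simp) (by simp) ?_ hk0
  simp

/-- For `m ≥ 1`, `K_{m,m}` is not proportionally `m`-choosable, i.e.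
`χ_pc(K_{m,m}) > m`. -/
theorem stmt16 (m : ℕ) (hm : 1 ≤ m) :
    ¬ ProportionallyChoosable (KBip m m) m ∧ m < propChoiceNumber (KBip m m) :=
  ⟨kBip_not_proportionallyChoosable hm le_rfl,
    lt_propChoiceNumber fun _ hk => kBip_not_proportionallyChoosable hm hk⟩
end

section
/- For every m ≥ 3 and every n with 2 ≤ n ≤ ⌊m/3⌋ + 2, the complete bipartite graph K_{n,m} is proportionally k-choosable for every k ≥ Δ(K_{n,m}) + 1 = m + 1. -/
/-!
Let `N = |V|` with `2N ≤ 3k`, so `N < 2k`. For a `k`-assignment every `η(c) < 2k`, and a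
proportional `L`-colouring is just an `L`-colouring using each colour at most twice, and at
most once unless `η(c) > k`, and at least once when `η(c) ≥ k`; on a bipartite graph it is
proper as soon as no colour is used on both sides.

Such a colouring is reached by three descents. Overused colours, and then unused colours with
`η(c) ≥ k`, are repaired by moving one use of a colour along a chain of recolourings; if no
chain helps, the colours reachable from it are closed under the lists of the vertices using
them, and double counting `η` over that set gives a contradiction. Finally, a colour `c` used at
`u` and `w` on both sides is removed by recolouring `u` or `w` with an unused colour of its
list, or by swapping with the only vertex of some colour of `L u` or `L w`. When neither move
exists, counting the vertices coloured from `L u ∪ L w` against those whose list misses `c`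
gives `2k + η(c) ≤ 2N`, impossible since `η(c) > k`.

For `K_{n,m}` with `m ≥ 3`, `n ≤ ⌊m/3⌋ + 2` and `k ≥ m + 1` one has `2(n + m) ≤ 3k`.
-/

open Finset SimpleGraph

theorem Relation.ReflTransGen.exists_last_exit {α : Type*} {r : α → α → Prop} {a b : α}
    (h : Relation.ReflTransGen r a b) (hab : a ≠ b) :
    ∃ a', a' ≠ a ∧ r a a' ∧ Relation.ReflTransGen (fun x y => x ≠ a ∧ r x y) a' b := by
  induction h with
  | refl => exact absurd rfl hab
  | @tail c b _ hcb ih =>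
    by_cases hca : c = a
    · subst hca
      exact ⟨b, hab.symm, hcb, .refl⟩
    · obtain ⟨a', ha', haa', hpath⟩ := ih (Ne.symm hca)
      exact ⟨a', ha', haa', hpath.tail ⟨hca, hcb⟩⟩

theorem exists_eq_zero_of_forall_exists_lt {α : Type*} {P : α → Prop} (f : α → ℕ)
    (h : ∀ x, P x → f x ≠ 0 → ∃ y, P y ∧ f y < f x) {x : α} (hx : P x) :
    ∃ y, P y ∧ f y = 0 := by
  classical
  have hex : ∃ n, ∃ y, P y ∧ f y = n := ⟨_, x, hx, rfl⟩
  obtain ⟨y, hy, hfy⟩ := Nat.find_spec hex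
  refine ⟨y, hy, by_contra fun h0 => ?_⟩
  obtain ⟨z, hz, hlt⟩ := h y hy (hfy ▸ h0)
  exact Nat.find_min hex (hfy ▸ hlt) ⟨z, hz, rfl⟩

namespace ProportionalColoring

open Relation

lemma update_mem {V : Type*} [DecidableEq V] {L : V → Finset ℕ} {g : V → ℕ}
    (hg : ∀ v, g v ∈ L v) {x : V} {d : ℕ} (hd : d ∈ L x) :
    ∀ v, Function.update g x d v ∈ L v := by
  intro v
  by_cases hv : v = x
  · subst hv; simpa
  · rw [Function.update_of_ne hv]; exact hg v

lemma update_eq_iff_of_ne {V : Type*} [DecidableEq V] {g : V → ℕ} {x : V} {d e : ℕ}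
    (hx : e ≠ g x) (hd : e ≠ d) (z : V) :
    Function.update g x d z = e ↔ g z = e := by
  by_cases hz : z = x
  · subst hz; simp [Ne.symm hx, Ne.symm hd]
  · rw [Function.update_of_ne hz]

def IsMixed {V : Type*} (side : V → Bool) (g : V → ℕ) (c : ℕ) : Prop :=
  ∃ u w, side u ≠ side w ∧ g u = c ∧ g w = c

lemma not_isMixed_of_forall_side_eq {V : Type*} {side : V → Bool} {g : V → ℕ} {c : ℕ}
    {s : Bool} (h : ∀ z, g z = c → side z = s) : ¬IsMixed side g c := by
  rintro ⟨u, w, hside, hu, hw⟩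
  exact hside ((h u hu).trans (h w hw).symm)

variable {V : Type*} [Fintype V]

section Counting

variable {L : V → Finset ℕ} {k : ℕ}

def colorCount (g : V → ℕ) (c : ℕ) : ℕ := #{v | g v = c}

lemma colorCount_pos {g : V → ℕ} {v : V} {c : ℕ} (h : g v = c) : 0 < colorCount g c :=
  card_pos.2 ⟨v, by simp [h]⟩

lemma colorCount_congr {g g' : V → ℕ} {c : ℕ} (h : ∀ z, g' z = c ↔ g z = c) :
    colorCount g' c = colorCount g c := by
  simp only [colorCount, h]

lemma two_le_colorCount {g : V → ℕ} {c : ℕ} {u w : V} (hu : g u = c) (hw : g w = c)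
    (huw : u ≠ w) : 2 ≤ colorCount g c :=
  one_lt_card.2 ⟨u, by simpa, w, by simpa, huw⟩

lemma eq_or_eq_of_colorCount_le_two [DecidableEq V] {g : V → ℕ} {c : ℕ} {u w : V}
    (hu : g u = c) (hw : g w = c) (huw : u ≠ w) (h : colorCount g c ≤ 2) :
    ∀ z, g z = c ↔ z = u ∨ z = w := by
  have hsub : ({u, w} : Finset V) ⊆ ({v | g v = c} : Finset V) := by
    intro z hz
    rcases mem_insert.1 hz with rfl | hz
    · simpa
    · rw [mem_singleton.1 hz]; simpa
  have heq := eq_of_subset_of_card_le hsub (by rw [card_pair huw]; exact h)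
  intro z
  simpa using (Finset.ext_iff.1 heq z).symm

lemma colorCount_eq_zero_of_notMem_palette {g : V → ℕ} (hg : ∀ v, g v ∈ L v) {c : ℕ}
    (hc : c ∉ palette L) : colorCount g c = 0 := by
  refine card_eq_zero.2 (filter_eq_empty_iff.2 fun v _ hv => hc ?_)
  exact mem_biUnion.2 ⟨v, mem_univ v, hv ▸ hg v⟩

lemma subset_palette (v : V) : L v ⊆ palette L :=
  fun _ hd => mem_biUnion.2 ⟨v, mem_univ v, hd⟩

lemma mult_pos {c : ℕ} (hc : c ∈ palette L) : 0 < mult L c := by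
  obtain ⟨v, _, hv⟩ := mem_biUnion.1 hc
  exact card_pos.2 ⟨v, by simpa using hv⟩

lemma mult_le_card (L : V → Finset ℕ) (c : ℕ) : mult L c ≤ Fintype.card V :=
  card_filter_le _ _

lemma sum_colorCount (g : V → ℕ) (K : Finset ℕ) :
    ∑ d ∈ K, colorCount g d = #{v | g v ∈ K} :=
  sum_card_fiberwise_eq_card_filter _ _ _

lemma sum_mult (L : V → Finset ℕ) (K : Finset ℕ) :
    ∑ d ∈ K, mult L d = ∑ v, #(K ∩ L v) := by
  simp only [mult, card_filter]
  rw [sum_comm]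
  refine sum_congr rfl fun v _ => ?_
  rw [← card_filter, filter_mem_eq_inter]

lemma mul_sum_colorCount_le_sum_mult (hL : IsKAssignment L k) {g : V → ℕ} {K : Finset ℕ}
    (hK : ∀ v, g v ∈ K → L v ⊆ K) :
    k * ∑ d ∈ K, colorCount g d ≤ ∑ d ∈ K, mult L d := by
  rw [sum_colorCount, sum_mult, mul_comm, ← smul_eq_mul, ← sum_const]
  calc ∑ _v ∈ {v | g v ∈ K}, k = ∑ v ∈ {v | g v ∈ K}, #(K ∩ L v) :=
        sum_congr rfl fun v hv => by
          rw [inter_eq_right.2 (hK v (mem_filter.1 hv).2), hL v]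
    _ ≤ ∑ v, #(K ∩ L v) := sum_le_sum_of_subset (filter_subset _ _)

lemma sum_mult_le_mul_sum_colorCount (hL : IsKAssignment L k) {g : V → ℕ} {K : Finset ℕ}
    (hK : ∀ v, ∀ d ∈ L v, d ∈ K → g v ∈ K) :
    ∑ d ∈ K, mult L d ≤ k * ∑ d ∈ K, colorCount g d := by
  rw [sum_mult, sum_colorCount, ← sum_filter_of_ne (p := fun v => g v ∈ K)]
  · calc ∑ v ∈ {v | g v ∈ K}, #(K ∩ L v) ≤ ∑ _v ∈ {v | g v ∈ K}, k :=
          sum_le_sum fun v _ => hL v ▸ card_le_card inter_subset_right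
      _ = k * #{v | g v ∈ K} := by rw [sum_const, smul_eq_mul, mul_comm]
  · intro v _ hv
    obtain ⟨d, hd⟩ := card_ne_zero.1 hv
    exact hK v d (mem_inter.1 hd).2 (mem_inter.1 hd).1

lemma two_mul_add_mult_le (hL : IsKAssignment L k) {g : V → ℕ} {c : ℕ} {u w : V}
    (hle : ∀ e, colorCount g e ≤ 2) (hused : ∀ d ∈ L u ∪ L w, 1 ≤ colorCount g d)
    (hsingle : ∀ v, colorCount g (g v) = 1 → c ∈ L v → g v ∈ L w → g v ∉ L u) :
    2 * k + mult L c ≤ 2 * Fintype.card V := by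
  set T := {d ∈ L w | colorCount g d = 1}
  have hw : ∑ d ∈ L w, colorCount g d + #T = 2 * k := by
    rw [card_filter, ← sum_add_distrib, ← hL w, mul_comm, ← smul_eq_mul, ← sum_const]
    refine sum_congr rfl fun d hd => ?_
    have := hle d
    have := hused d (mem_union_right _ hd)
    split_ifs <;> omega
  have hvertices : ∑ d ∈ L w, colorCount g d + #(L u \ L w) ≤ Fintype.card V := by
    have hsdiff : #(L u \ L w) ≤ ∑ d ∈ L u \ L w, colorCount g d := by
      simpa using card_nsmul_le_sum _ _ 1 fun d hd => hused d (mem_union_left _ (mem_sdiff.1 hd).1)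
    have := sum_union (disjoint_sdiff (s := L w) (t := L u)) (f := colorCount g)
    rw [sum_colorCount] at this
    have := card_le_univ ({v | g v ∈ L w ∪ (L u \ L w)} : Finset V)
    omega
  -- A colour of `T` lies in `L w \ L u`, or its only vertex misses `c` from its list.
  have hT : #T ≤ Fintype.card V - mult L c + #(L w \ L u) := by
    have hinter : #(T ∩ L u) ≤ Fintype.card V - mult L c := by
      have hone : ∑ d ∈ T ∩ L u, colorCount g d = #(T ∩ L u) := by
        rw [card_eq_sum_ones]
        exact sum_congr rfl fun d hd => (mem_filter.1 (mem_inter.1 hd).1).2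
      have hmiss : #({v | g v ∈ T ∩ L u} : Finset V) ≤ #({v | c ∉ L v} : Finset V) := by
        refine card_le_card fun v hv => ?_
        obtain ⟨hT, hu⟩ := mem_inter.1 (mem_filter.1 hv).2
        obtain ⟨hw, h1⟩ := mem_filter.1 hT
        exact mem_filter.2 ⟨mem_univ v, fun hc => hsingle v h1 hc hw hu⟩
      have := card_filter_add_card_filter_not (s := (univ : Finset V)) (fun v => c ∈ L v)
      rw [card_univ] at this
      rw [← sum_colorCount, hone] at hmiss
      unfold mult
      omega
    have hsdiff : #(T \ L u) ≤ #(L w \ L u) :=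
      card_le_card (sdiff_subset_sdiff (filter_subset _ _) le_rfl)
    have := card_inter_add_card_sdiff T (L u)
    omega
  have := card_sdiff_comm (s := L w) (t := L u) (by rw [hL w, hL u])
  have := mult_le_card L c
  omega

end Counting

section Shifting

variable [DecidableEq V] {L : V → Finset ℕ}

lemma colorCount_update_add (g : V → ℕ) (x : V) (d e : ℕ) :
    colorCount (Function.update g x d) e + (if g x = e then 1 else 0) =
      colorCount g e + (if d = e then 1 else 0) := by
  simp only [colorCount, card_filter]
  rw [← add_sum_erase _ _ (mem_univ x), ← add_sum_erase _ _ (mem_univ x),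
    sum_congr rfl fun z hz => by rw [Function.update_of_ne (ne_of_mem_erase hz)]]
  simp only [Function.update_self]
  ring

/-- Along a path of this relation one use of a colour can be moved to another colour. -/
def CanShift (L : V → Finset ℕ) (g : V → ℕ) (d d' : ℕ) : Prop :=
  ∃ v, g v = d ∧ d' ∈ L v

-- Induction on the set `S` of colours the path may leave from: after the first recolouring,
-- the part of the path beyond the last exit from `a` is still a path, and never leaves `a`.
private lemma exists_shift_of_reflTransGen_of_subset (S : Finset ℕ) :
    ∀ {g : V → ℕ} {a b : ℕ}, (∀ v, g v ∈ L v) →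
      ReflTransGen (fun x y => x ∈ S ∧ CanShift L g x y) a b → a ≠ b →
      ∃ g' : V → ℕ, (∀ v, g' v ∈ L v) ∧ ∀ e,
        colorCount g' e + (if a = e then 1 else 0) = colorCount g e + (if b = e then 1 else 0) := by
  induction S using Finset.strongInduction with
  | H S ih =>
  intro g a b hg hpath hab
  obtain ⟨a₁, ha₁, ⟨haS, v, hva, ha₁v⟩, hrest⟩ := hpath.exists_last_exit hab
  have hcount₁ := colorCount_update_add g v a₁
  rw [hva] at hcount₁
  by_cases hb : a₁ = b
  · subst hb
    exact ⟨_, update_mem hg ha₁v, hcount₁⟩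
  have hpath₁ :
      ReflTransGen (fun x y => x ∈ S.erase a ∧ CanShift L (Function.update g v a₁) x y)
        a₁ b := by
    refine ReflTransGen.mono (fun x y h => ?_) _ _ hrest
    obtain ⟨hxa, hxS, u, hux, hyu⟩ := h
    have huv : u ≠ v := by rintro rfl; exact hxa (hux ▸ hva)
    exact ⟨mem_erase.2 ⟨hxa, hxS⟩, u, by rwa [Function.update_of_ne huv], hyu⟩
  obtain ⟨g', hg', hcount'⟩ :=
    ih (S.erase a) (erase_ssubset haS) (update_mem hg ha₁v) hpath₁ hb
  refine ⟨g', hg', fun e => ?_⟩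
  have h₁ := hcount₁ e
  have h₂ := hcount' e
  split_ifs at h₁ h₂ ⊢ <;> omega

theorem exists_shift_of_reflTransGen {g : V → ℕ} (hg : ∀ v, g v ∈ L v) {a b : ℕ}
    (h : ReflTransGen (CanShift L g) a b) (hab : a ≠ b) :
    ∃ g' : V → ℕ, (∀ v, g' v ∈ L v) ∧ ∀ e,
      colorCount g' e + (if a = e then 1 else 0) = colorCount g e + (if b = e then 1 else 0) :=
  exists_shift_of_reflTransGen_of_subset (univ.image g) hg
    (ReflTransGen.mono (fun _ _ ⟨v, hv, hy⟩ =>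
      ⟨hv ▸ mem_image_of_mem g (mem_univ v), v, hv, hy⟩) _ _ h) hab

end Shifting

section Capacity

variable {L : V → Finset ℕ} {k : ℕ}

/-- When `|V| < 2k`, every `η(c)` is below `2k`, so a proportional colouring uses `c` at most
`capacity k L c = ⌈η(c)/k⌉` times, and at least once when `η(c) ≥ k`. -/
def capacity (k : ℕ) (L : V → Finset ℕ) (c : ℕ) : ℕ := if k < mult L c then 2 else 1

lemma one_le_capacity (c : ℕ) : 1 ≤ capacity k L c := by
  unfold capacity; split <;> omega

lemma capacity_le_two (c : ℕ) : capacity k L c ≤ 2 := by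
  unfold capacity; split <;> omega

lemma mult_le_mul_capacity (hN : Fintype.card V < 2 * k) (c : ℕ) :
    mult L c ≤ k * capacity k L c := by
  have := mult_le_card L c
  unfold capacity; split <;> omega

def excess (k : ℕ) (L : V → Finset ℕ) (g : V → ℕ) : ℕ :=
  ∑ c ∈ palette L, (colorCount g c - capacity k L c)

lemma colorCount_le_capacity_of_excess_eq_zero {g : V → ℕ} (hg : ∀ v, g v ∈ L v)
    (h : excess k L g = 0) (c : ℕ) : colorCount g c ≤ capacity k L c := by
  by_cases hc : c ∈ palette L
  · have := (sum_eq_zero_iff.1 h) c hc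
    omega
  · rw [colorCount_eq_zero_of_notMem_palette hg hc]
    exact Nat.zero_le _

def missingColors (k : ℕ) (L : V → Finset ℕ) (g : V → ℕ) : Finset ℕ :=
  {c ∈ palette L | k ≤ mult L c ∧ colorCount g c = 0}

lemma one_le_colorCount_of_missingColors_eq_empty {g : V → ℕ} (hk : 0 < k)
    (h : missingColors k L g = ∅) {c : ℕ} (hc : k ≤ mult L c) : 1 ≤ colorCount g c := by
  have hcP : c ∈ palette L := by
    obtain ⟨v, hv⟩ := card_pos.1 (hk.trans_le hc)
    exact subset_palette v (mem_filter.1 hv).2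
  by_contra h0
  have : c ∈ missingColors k L g := mem_filter.2 ⟨hcP, hc, by omega⟩
  simp [h] at this

variable [DecidableEq V]

theorem exists_excess_lt (hL : IsKAssignment L k) (hN : Fintype.card V < 2 * k) {g : V → ℕ}
    (hg : ∀ v, g v ∈ L v) (h : excess k L g ≠ 0) :
    ∃ g' : V → ℕ, (∀ v, g' v ∈ L v) ∧ excess k L g' < excess k L g := by
  classical
  obtain ⟨c, hcP, hc⟩ := exists_ne_zero_of_sum_ne_zero h
  replace hc : capacity k L c < colorCount g c := by omega
  set K := {d ∈ palette L | ReflTransGen (CanShift L g) c d}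
  have hcK : c ∈ K := mem_filter.2 ⟨hcP, .refl⟩
  by_cases hfree : ∃ d ∈ K, colorCount g d < capacity k L d
  · obtain ⟨d, hdK, hd⟩ := hfree
    have hcd : c ≠ d := by rintro rfl; omega
    obtain ⟨g', hg', hcount⟩ := exists_shift_of_reflTransGen hg (mem_filter.1 hdK).2 hcd
    refine ⟨g', hg', sum_lt_sum (fun e _ => ?_) ⟨c, hcP, ?_⟩⟩
    · have := hcount e
      split_ifs at this <;> subst_vars <;> omega
    · have := hcount c
      simp only [if_pos, if_neg hcd.symm] at this
      omega
  · push Not at hfree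
    have hclosed : ∀ v, g v ∈ K → L v ⊆ K := fun v hv d hd =>
      mem_filter.2 ⟨subset_palette v hd, (mem_filter.1 hv).2.tail ⟨v, rfl, hd⟩⟩
    have hmult : ∑ d ∈ K, mult L d ≤ k * ∑ d ∈ K, capacity k L d := by
      rw [mul_sum]
      exact sum_le_sum fun d _ => mult_le_mul_capacity hN d
    have hcap : ∑ d ∈ K, capacity k L d < ∑ d ∈ K, colorCount g d :=
      sum_lt_sum hfree ⟨c, hcK, hc⟩
    have := mul_sum_colorCount_le_sum_mult hL hclosed
    have := Nat.mul_lt_mul_of_pos_left hcap (show 0 < k by omega)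
    omega

theorem exists_card_missingColors_lt (hL : IsKAssignment L k) {g : V → ℕ}
    (hg : ∀ v, g v ∈ L v) (hcap : ∀ c, colorCount g c ≤ capacity k L c)
    (h : (missingColors k L g).Nonempty) :
    ∃ g' : V → ℕ, (∀ v, g' v ∈ L v) ∧ (∀ c, colorCount g' c ≤ capacity k L c) ∧
      #(missingColors k L g') < #(missingColors k L g) := by
  classical
  obtain ⟨c, hc⟩ := h
  obtain ⟨hcP, hck, hc0⟩ := mem_filter.1 hc
  set K := {d ∈ palette L | ReflTransGen (CanShift L g) d c}
  have hcK : c ∈ K := mem_filter.2 ⟨hcP, .refl⟩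
  by_cases hspare : ∃ d ∈ K, 2 ≤ colorCount g d ∨ (colorCount g d = 1 ∧ mult L d < k)
  · obtain ⟨d, hdK, hd⟩ := hspare
    have hdc : d ≠ c := by rintro rfl; omega
    obtain ⟨g', hg', hcount⟩ := exists_shift_of_reflTransGen hg (mem_filter.1 hdK).2 hdc
    refine ⟨g', hg', fun e => ?_, ?_⟩
    · have hce := hcount e
      have := hcap e
      have := one_le_capacity (k := k) (L := L) e
      split_ifs at hce <;> subst_vars <;> omega
    · refine (card_le_card fun e he => ?_).trans_lt (card_erase_lt_of_mem hc)
      obtain ⟨heP, hek, he0⟩ := mem_filter.1 he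
      have hce := hcount e
      by_cases hec : c = e
      · subst hec
        simp [hdc] at hce
        omega
      by_cases hde : d = e
      · subst hde
        simp [hec] at hce
        omega
      simp only [if_neg hec, if_neg hde, add_zero] at hce
      exact mem_erase.2 ⟨Ne.symm hec, mem_filter.2 ⟨heP, hek, by omega⟩⟩
  · push Not at hspare
    have hclosed : ∀ v, ∀ d ∈ L v, d ∈ K → g v ∈ K := fun v d hd hdK =>
      mem_filter.2
        ⟨subset_palette v (hg v), ReflTransGen.head ⟨v, rfl, hd⟩ (mem_filter.1 hdK).2⟩
    have hlt : k * ∑ d ∈ K, colorCount g d < ∑ d ∈ K, mult L d := by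
      rw [mul_sum]
      refine sum_lt_sum (fun d hd => ?_) ⟨c, hcK, by rw [hc0, mul_zero]; exact mult_pos hcP⟩
      obtain ⟨hd2, hd1⟩ := hspare d hd
      obtain h0 | h1 : colorCount g d = 0 ∨ colorCount g d = 1 := by omega
      · rw [h0, mul_zero]; exact Nat.zero_le _
      · rw [h1, mul_one]; exact hd1 h1
    have := sum_mult_le_mul_sum_colorCount hL hclosed
    omega

end Capacity

section Mixing

variable {L : V → Finset ℕ} {k : ℕ} {side : V → Bool} {g g' : V → ℕ} {c d : ℕ}

instance (side : V → Bool) (g : V → ℕ) : DecidablePred (IsMixed side g) :=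
  fun _ => by unfold IsMixed; infer_instance

def mixedColors (side : V → Bool) (g : V → ℕ) : Finset ℕ :=
  {c ∈ univ.image g | IsMixed side g c}

lemma mem_mixedColors : c ∈ mixedColors side g ↔ IsMixed side g c := by
  refine ⟨fun h => (mem_filter.1 h).2, fun h => mem_filter.2 ⟨?_, h⟩⟩
  obtain ⟨u, _, _, hu, _⟩ := h
  exact hu ▸ mem_image_of_mem g (mem_univ u)

lemma not_isMixed_of_colorCount_le_one (h : colorCount g c ≤ 1) : ¬IsMixed side g c := by
  rintro ⟨u, w, hside, hu, hw⟩
  have := two_le_colorCount hu hw fun huw => hside (huw ▸ rfl)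
  omega

lemma card_mixedColors_lt (hc : IsMixed side g c) (hc' : ¬IsMixed side g' c)
    (hd' : colorCount g' d ≤ 1)
    (hother : ∀ e, e ≠ c → e ≠ d → ∀ z, g' z = e ↔ g z = e) :
    #(mixedColors side g') < #(mixedColors side g) := by
  refine (card_le_card fun e he => ?_).trans_lt (card_erase_lt_of_mem (mem_mixedColors.2 hc))
  have he := mem_mixedColors.1 he
  have hec : e ≠ c := by rintro rfl; exact hc' he
  have hed : e ≠ d := by rintro rfl; exact not_isMixed_of_colorCount_le_one hd' he
  refine mem_erase.2 ⟨hec, mem_mixedColors.2 ?_⟩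
  simpa only [IsMixed, hother e hec hed] using he

structure IsBalanced (k : ℕ) (L : V → Finset ℕ) (g : V → ℕ) : Prop where
  mem_list : ∀ v, g v ∈ L v
  colorCount_le : ∀ c, colorCount g c ≤ capacity k L c
  one_le_colorCount : ∀ c, k ≤ mult L c → 1 ≤ colorCount g c

lemma IsBalanced.of_recolor (hg : IsBalanced k L g) (hg' : ∀ v, g' v ∈ L v)
    (hc : 1 ≤ colorCount g' c) (hcc : colorCount g' c ≤ colorCount g c)
    (hd : colorCount g' d = 1)
    (hother : ∀ e, e ≠ c → e ≠ d → colorCount g' e = colorCount g e) :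
    IsBalanced k L g' where
  mem_list := hg'
  colorCount_le e := by
    by_cases hec : e = c
    · subst hec; exact hcc.trans (hg.colorCount_le e)
    by_cases hed : e = d
    · subst hed; rw [hd]; exact one_le_capacity e
    rw [hother e hec hed]; exact hg.colorCount_le e
  one_le_colorCount e he := by
    by_cases hec : e = c
    · subst hec; exact hc
    by_cases hed : e = d
    · subst hed; rw [hd]
    rw [hother e hec hed]; exact hg.one_le_colorCount e he

variable [DecidableEq V] {x x' : V}

lemma exists_card_mixedColors_lt_of_unused (hg : IsBalanced k L g)
    (hfib : ∀ z, g z = c ↔ z = x ∨ z = x') (hside : side x ≠ side x') (hd : d ∈ L x)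
    (hd0 : colorCount g d = 0) :
    ∃ g', IsBalanced k L g' ∧ #(mixedColors side g') < #(mixedColors side g) := by
  have hgx : g x = c := (hfib x).2 (.inl rfl)
  have hx'x : x' ≠ x := fun h => hside (h ▸ rfl)
  have hdc : d ≠ c := by rintro rfl; have := colorCount_pos hgx; omega
  have hcount := colorCount_update_add g x d
  rw [hgx] at hcount
  have hother : ∀ e, e ≠ c → e ≠ d → ∀ z, Function.update g x d z = e ↔ g z = e :=
    fun e hec hed => update_eq_iff_of_ne (hgx ▸ hec) hed
  have hc_side : ∀ z, Function.update g x d z = c → side z = side x' := by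
    intro z hz
    have hzx : z ≠ x := by rintro rfl; simp [hdc] at hz
    rw [Function.update_of_ne hzx, hfib, or_iff_right hzx] at hz
    rw [hz]
  have hc1 : 1 ≤ colorCount (Function.update g x d) c :=
    colorCount_pos (by rw [Function.update_of_ne hx'x]; exact (hfib x').2 (.inr rfl))
  have hcc := hcount c
  have hd1 := hcount d
  simp only [if_pos, if_neg hdc, if_neg hdc.symm] at hcc hd1
  refine ⟨_, hg.of_recolor (update_mem hg.mem_list hd) hc1 (by omega) (by omega)
    fun e hec hed => colorCount_congr (hother e hec hed), ?_⟩
  exact card_mixedColors_lt ⟨x, x', hside, hgx, (hfib x').2 (.inr rfl)⟩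
    (not_isMixed_of_forall_side_eq hc_side) (by omega) hother

lemma exists_card_mixedColors_lt_of_swap (hg : IsBalanced k L g)
    (hfib : ∀ z, g z = c ↔ z = x ∨ z = x') (hside : side x ≠ side x') {y : V} (hy : g y = d)
    (hd1 : colorCount g d = 1) (hsy : side y = side x') (hcy : c ∈ L y) (hdx : d ∈ L x) :
    ∃ g', IsBalanced k L g' ∧ #(mixedColors side g') < #(mixedColors side g) := by
  have hgx : g x = c := (hfib x).2 (.inl rfl)
  have hgx' : g x' = c := (hfib x').2 (.inr rfl)
  have hdc : d ≠ c := by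
    rintro rfl; have := two_le_colorCount hgx hgx' fun h => hside (h ▸ rfl); omega
  have hyx : y ≠ x := by rintro rfl; exact hdc (hy.symm.trans hgx)
  have hg₁y : Function.update g x d y = d := by rw [Function.update_of_ne hyx, hy]
  have hcount : ∀ e, colorCount (Function.update (Function.update g x d) y c) e =
      colorCount g e := by
    intro e
    have h₁ := colorCount_update_add g x d e
    have h₂ := colorCount_update_add (Function.update g x d) y c e
    rw [hgx] at h₁
    rw [hg₁y] at h₂
    omega
  have hother : ∀ e, e ≠ c → e ≠ d → ∀ z,
      Function.update (Function.update g x d) y c z = e ↔ g z = e := fun e hec hed z => by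
    rw [update_eq_iff_of_ne (hg₁y.symm ▸ hed) hec, update_eq_iff_of_ne (hgx ▸ hec) hed]
  have hc_side : ∀ z, Function.update (Function.update g x d) y c z = c → side z = side x' := by
    intro z hz
    by_cases hzy : z = y
    · rw [hzy, hsy]
    have hzx : z ≠ x := by rintro rfl; simp [Function.update_of_ne hzy, hdc] at hz
    rw [Function.update_of_ne hzy, Function.update_of_ne hzx, hfib, or_iff_right hzx] at hz
    rw [hz]
  refine ⟨_, hg.of_recolor (update_mem (update_mem hg.mem_list hdx) hcy)
    (colorCount_pos (Function.update_self y c (Function.update g x d))) (hcount c).le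
    (by rw [hcount, hd1]) fun e _ _ => hcount e, ?_⟩
  exact card_mixedColors_lt ⟨x, x', hside, hgx, hgx'⟩ (not_isMixed_of_forall_side_eq hc_side)
    (by rw [hcount, hd1]) hother

theorem exists_card_mixedColors_lt (hL : IsKAssignment L k)
    (hN : 2 * Fintype.card V ≤ 3 * k) (hg : IsBalanced k L g) (hc : IsMixed side g c) :
    ∃ g', IsBalanced k L g' ∧ #(mixedColors side g') < #(mixedColors side g) := by
  by_contra hstuck
  obtain ⟨u, w, hside, hu, hw⟩ := hc
  have huw : u ≠ w := fun h => hside (h ▸ rfl)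
  have h2 := two_le_colorCount hu hw huw
  have hcap := hg.colorCount_le c
  have hmult : k < mult L c := by
    by_contra h
    simp only [capacity, if_neg h] at hcap
    omega
  have hfib := eq_or_eq_of_colorCount_le_two hu hw huw (hcap.trans (capacity_le_two c))
  have hfib' : ∀ z, g z = c ↔ z = w ∨ z = u := fun z => (hfib z).trans or_comm
  have hused : ∀ d ∈ L u ∪ L w, 1 ≤ colorCount g d := by
    intro d hd
    by_contra h0
    rcases mem_union.1 hd with hd | hd
    · exact hstuck (exists_card_mixedColors_lt_of_unused hg hfib hside hd (by omega))
    · exact hstuck (exists_card_mixedColors_lt_of_unused hg hfib' (Ne.symm hside) hd (by omega))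
  have hsingle : ∀ v, colorCount g (g v) = 1 → c ∈ L v → g v ∈ L w → g v ∉ L u := by
    intro v h1 hcv hvw hvu
    obtain hsv | hsv :=
      (by decide : ∀ a b c : Bool, a ≠ b → c = b ∨ c = a) _ _ (side v) hside
    · exact hstuck (exists_card_mixedColors_lt_of_swap hg hfib hside rfl h1 hsv hcv hvu)
    · exact hstuck (exists_card_mixedColors_lt_of_swap hg hfib' (Ne.symm hside) rfl h1 hsv hcv hvw)
  have := two_mul_add_mult_le hL (fun e => (hg.colorCount_le e).trans (capacity_le_two e))
    hused hsingle
  omega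

end Mixing

section Balanced

variable [DecidableEq V] {L : V → Finset ℕ} {k : ℕ}

theorem exists_isBalanced_forall_not_isMixed (side : V → Bool) (hL : IsKAssignment L k)
    (hk : 0 < k) (hN : 2 * Fintype.card V ≤ 3 * k) :
    ∃ g, IsBalanced k L g ∧ ∀ c, ¬IsMixed side g c := by
  choose g₀ hg₀ using fun v => card_pos.1 ((hL v).symm ▸ hk)
  obtain ⟨g₁, hg₁, hexcess⟩ := exists_eq_zero_of_forall_exists_lt (excess k L)
    (fun _ hg h => exists_excess_lt hL (by omega) hg h) hg₀
  obtain ⟨g₂, ⟨hg₂, hcap₂⟩, hmissing⟩ := exists_eq_zero_of_forall_exists_lt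
    (P := fun g => (∀ v, g v ∈ L v) ∧ ∀ c, colorCount g c ≤ capacity k L c)
    (fun g => #(missingColors k L g))
    (fun _ hg h => by
      obtain ⟨g', hg', hcap', hlt⟩ :=
        exists_card_missingColors_lt hL hg.1 hg.2 (card_ne_zero.1 h)
      exact ⟨g', ⟨hg', hcap'⟩, hlt⟩)
    ⟨hg₁, colorCount_le_capacity_of_excess_eq_zero hg₁ hexcess⟩
  obtain ⟨g₃, hg₃, hmixed⟩ := exists_eq_zero_of_forall_exists_lt (P := IsBalanced k L)
    (fun g => #(mixedColors side g))
    (fun _ hg h => by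
      obtain ⟨c, hc⟩ := card_ne_zero.1 h
      exact exists_card_mixedColors_lt hL hN hg (mem_mixedColors.1 hc))
    ⟨hg₂, hcap₂, fun _ => one_le_colorCount_of_missingColors_eq_empty hk
      (card_eq_zero.1 hmissing)⟩
  exact ⟨g₃, hg₃, fun c hc => by simpa [card_eq_zero.1 hmixed] using mem_mixedColors.2 hc⟩

end Balanced

lemma IsBalanced.colorCount_eq_or {L : V → Finset ℕ} {k : ℕ} {g : V → ℕ}
    (hg : IsBalanced k L g) (hN : Fintype.card V < 2 * k) {c : ℕ} (hc : c ∈ palette L) :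
    colorCount g c = mult L c / k ∨ colorCount g c = (mult L c + k - 1) / k := by
  have := mult_pos hc
  have := mult_le_card L c
  have hcap := hg.colorCount_le c
  unfold capacity at hcap
  rcases lt_trichotomy (mult L c) k with h | h | h
  · rw [if_neg (by omega)] at hcap
    rw [Nat.div_eq_of_lt h, Nat.div_eq_of_lt_le (k := 1) (by omega) (by omega)]
    omega
  · have := hg.one_le_colorCount c h.ge
    rw [if_neg (by omega)] at hcap
    rw [h, Nat.div_self (by omega)]
    omega
  · have := hg.one_le_colorCount c h.le
    rw [if_pos h] at hcap
    rw [Nat.div_eq_of_lt_le (k := 1) (by omega) (by omega),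
      Nat.div_eq_of_lt_le (k := 2) (by omega) (by omega)]
    omega

end ProportionalColoring

open ProportionalColoring in
theorem SimpleGraph.IsBipartite.proportionallyChoosable {V : Type*} [Fintype V]
    {G : SimpleGraph V} (hG : G.IsBipartite) {k : ℕ} (hk : 0 < k)
    (hN : 2 * Fintype.card V ≤ 3 * k) : ProportionallyChoosable G k := by
  classical
  obtain ⟨C⟩ := hG
  let side := G.recolorOfEquiv finTwoEquiv C
  intro L hL
  obtain ⟨g, hg, hmixed⟩ := exists_isBalanced_forall_not_isMixed side hL hk hN
  refine ⟨g, ⟨hg.mem_list, fun u w huw hgw => ?_⟩,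
    fun c hc => hg.colorCount_eq_or (by omega) hc⟩
  exact hmixed (g u) ⟨u, w, side.valid huw, rfl, hgw.symm⟩

theorem stmt18_general (n m : ℕ) (hm : 3 ≤ m) (hnm : n ≤ m / 3 + 2) :
    ∀ k : ℕ, m + 1 ≤ k → ProportionallyChoosable (KBip n m) k := by
  intro k hk
  refine IsBipartite.proportionallyChoosable ?_ (by omega) ?_
  · exact (CompleteBipartiteGraph.bicoloring _ _).colorable
  · simp only [Fintype.card_sum, Fintype.card_fin]
    omega

/-- For `m ≥ 3` and `2 ≤ n ≤ ⌊m/3⌋ + 2`, `K_{n,m}` is proportionally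
`k`-choosable for every `k ≥ Δ(K_{n,m}) + 1 = m + 1`. -/
theorem stmt18 (n m : ℕ) (hm : 3 ≤ m) (hn : 2 ≤ n) (hnm : n ≤ m / 3 + 2) :
    ∀ k : ℕ, m + 1 ≤ k → ProportionallyChoosable (KBip n m) k :=
  stmt18_general n m hm hnm
end
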